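/- Conversely, if f is analytic with f' nonvanishing on an open set U and y₁ = 1/√(f') (some analytic branch) and y = f·y₁, then y and y₁ are linearly independent solutions of y'' + (1/2)·S_f·y = 0. -/

import Mathlib

/-- The Schwarzian derivative `S_f = f'''/f' - (3/2)(f''/f')²`. -/
noncomputable def schwarzian (f : ℂ → ℂ) (z : ℂ) : ℂ :=
  deriv (deriv (deriv f)) z / deriv f z -
    (3 / 2) * (deriv (deriv f) z / deriv f z) ^ 2

/-- If `f` is analytic with nonvanishing derivative on an open set `U`, and `g` is an
analytic branch of `√(f')` on `U`, then `y₁ = 1/g` and `y = f/g` are linearly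
independent solutions of `y'' + (1/2)·S_f·y = 0`. -/
theorem stmt_2 (U : Set ℂ) (hU : IsOpen U)
    (f g : ℂ → ℂ) (hf : AnalyticOn ℂ f U) (hf' : ∀ z ∈ U, deriv f z ≠ 0)
    (hg : AnalyticOn ℂ g U) (hg2 : ∀ z ∈ U, g z ^ 2 = deriv f z)
    (y y₁ : ℂ → ℂ) (hy₁def : ∀ z ∈ U, y₁ z = 1 / g z)
    (hydef : ∀ z ∈ U, y z = f z / g z) :
    (∀ z ∈ U, deriv (deriv y₁) z + (1 / 2) * schwarzian f z * y₁ z = 0) ∧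
    (∀ z ∈ U, deriv (deriv y) z + (1 / 2) * schwarzian f z * y z = 0) ∧
    (∀ z ∈ U, deriv y z * y₁ z - y z * deriv y₁ z ≠ 0) := by
  have hgN : AnalyticOnNhd ℂ g U := hU.analyticOn_iff_analyticOnNhd.mp hg
  have hfN : AnalyticOnNhd ℂ f U := hU.analyticOn_iff_analyticOnNhd.mp hf
  have hgdN : AnalyticOnNhd ℂ (deriv g) U := hgN.deriv
  have hfdN : AnalyticOnNhd ℂ (deriv f) U := hfN.deriv
  have hgd : ∀ z ∈ U, DifferentiableAt ℂ g z := fun z hz => (hgN z hz).differentiableAt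
  have hfd : ∀ z ∈ U, DifferentiableAt ℂ f z := fun z hz => (hfN z hz).differentiableAt
  have hgd2 : ∀ z ∈ U, DifferentiableAt ℂ (deriv g) z :=
    fun z hz => (hgdN z hz).differentiableAt
  have hfd2 : ∀ z ∈ U, DifferentiableAt ℂ (deriv f) z :=
    fun z hz => (hfdN z hz).differentiableAt
  have hgne : ∀ z ∈ U, g z ≠ 0 := by
    intro z hz h
    exact hf' z hz (by rw [← hg2 z hz, h]; ring)
  -- second derivative of f
  have hd2f : ∀ z ∈ U, deriv (deriv f) z = 2 * g z * deriv g z := by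
    intro z hz
    have he : deriv f =ᶠ[nhds z] fun w => g w ^ 2 :=
      Filter.eventuallyEq_of_mem (hU.mem_nhds hz) (fun w hw => (hg2 w hw).symm)
    rw [he.deriv_eq, deriv_fun_pow (hgd z hz) 2]
    norm_num
  -- third derivative of f
  have hd3f : ∀ z ∈ U, deriv (deriv (deriv f)) z
      = 2 * (deriv g z) ^ 2 + 2 * g z * deriv (deriv g) z := by
    intro z hz
    have he : deriv (deriv f) =ᶠ[nhds z] fun w => 2 * g w * deriv g w :=
      Filter.eventuallyEq_of_mem (hU.mem_nhds hz) (fun w hw => hd2f w hw)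
    rw [he.deriv_eq]
    have : (fun w => 2 * g w * deriv g w) = fun w => 2 * (g w * deriv g w) := by
      funext w; ring
    rw [this, deriv_const_mul 2 ((hgd z hz).fun_mul (hgd2 z hz)),
      deriv_fun_mul (hgd z hz) (hgd2 z hz)]
    ring
  -- simplified form of the Schwarzian
  have hS : ∀ z ∈ U, schwarzian f z
      = (2 * g z * deriv (deriv g) z - 4 * (deriv g z) ^ 2) / g z ^ 2 := by
    intro z hz
    have ha := hgne z hz
    rw [schwarzian, hd3f z hz, hd2f z hz, ← hg2 z hz]
    field_simp
    ring
  -- first derivative of y₁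
  have hdy₁ : ∀ z ∈ U, deriv y₁ z = -(deriv g z) / g z ^ 2 := by
    intro z hz
    have he : y₁ =ᶠ[nhds z] fun w => (g w)⁻¹ :=
      Filter.eventuallyEq_of_mem (hU.mem_nhds hz)
        (fun w hw => by rw [hy₁def w hw, one_div])
    rw [he.deriv_eq, deriv_fun_inv'' (hgd z hz) (hgne z hz)]
  -- second derivative of y₁
  have hddy₁ : ∀ z ∈ U, deriv (deriv y₁) z
      = (-(deriv (deriv g) z) * g z ^ 2 + deriv g z * (2 * g z * deriv g z)) / (g z ^ 2) ^ 2 := by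
    intro z hz
    have he : deriv y₁ =ᶠ[nhds z] fun w => -(deriv g w) / g w ^ 2 :=
      Filter.eventuallyEq_of_mem (hU.mem_nhds hz) (fun w hw => hdy₁ w hw)
    rw [he.deriv_eq, deriv_fun_div (hgd2 z hz).fun_neg ((hgd z hz).fun_pow 2)
      (pow_ne_zero 2 (hgne z hz)), deriv.fun_neg, deriv_fun_pow (hgd z hz) 2]
    norm_num
  -- first derivative of y
  have hdy : ∀ z ∈ U, deriv y z = (deriv f z * g z - f z * deriv g z) / g z ^ 2 := by
    intro z hz
    have he : y =ᶠ[nhds z] fun w => f w / g w :=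
      Filter.eventuallyEq_of_mem (hU.mem_nhds hz) (fun w hw => hydef w hw)
    rw [he.deriv_eq, deriv_fun_div (hfd z hz) (hgd z hz) (hgne z hz)]
  -- second derivative of y
  have hddy : ∀ z ∈ U, deriv (deriv y) z
      = ((deriv (deriv f) z * g z + deriv f z * deriv g z
          - (deriv f z * deriv g z + f z * deriv (deriv g) z)) * g z ^ 2
        - (deriv f z * g z - f z * deriv g z) * (2 * g z * deriv g z)) / (g z ^ 2) ^ 2 := by
    intro z hz
    have he : deriv y =ᶠ[nhds z] fun w => (deriv f w * g w - f w * deriv g w) / g w ^ 2 :=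
      Filter.eventuallyEq_of_mem (hU.mem_nhds hz) (fun w hw => hdy w hw)
    rw [he.deriv_eq, deriv_fun_div (((hfd2 z hz).fun_mul (hgd z hz)).fun_sub
      ((hfd z hz).fun_mul (hgd2 z hz))) ((hgd z hz).fun_pow 2) (pow_ne_zero 2 (hgne z hz)),
      deriv_fun_sub ((hfd2 z hz).fun_mul (hgd z hz)) ((hfd z hz).fun_mul (hgd2 z hz)),
      deriv_fun_mul (hfd2 z hz) (hgd z hz), deriv_fun_mul (hfd z hz) (hgd2 z hz),
      deriv_fun_pow (hgd z hz) 2]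
    norm_num
  refine ⟨?_, ?_, ?_⟩
  · intro z hz
    rw [hddy₁ z hz, hy₁def z hz, hS z hz]
    have ha := hgne z hz
    field_simp
    ring
  · intro z hz
    rw [hddy z hz, hydef z hz, hS z hz, hd2f z hz, ← hg2 z hz]
    have ha := hgne z hz
    field_simp
    ring
  · intro z hz
    have h1 : deriv y z * y₁ z - y z * deriv y₁ z = 1 := by
      rw [hdy z hz, hdy₁ z hz, hy₁def z hz, hydef z hz, ← hg2 z hz]
      have ha := hgne z hz
      field_simp
      ring
    rw [h1]
    exact one_ne_zero
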